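/- Let A ∈ ℝ^{n×n} be symmetric, fix a partition of {1,…,n} into nonempty clusters S_1,…,S_r with sizes m_k, let β ∈ ℝ, and let Λ be the matrix of the dual construction. If uᵀAu ≤ β·‖u‖² for every u ∈ ℝ^n satisfying Σ_{i∈S_k} u_i = 0 for every cluster k, then Λ is positive semidefinite. -/

import Mathlib

open Matrix BigOperators

noncomputable section

/-- The cluster `S_k` of a cluster assignment `z`. -/
def cluster {n r : ℕ} (z : Fin n → Fin r) (k : Fin r) : Finset (Fin n) :=
  Finset.univ.filter (fun i => z i = k)

/-- The cluster size `m_k`. -/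
def csize {n r : ℕ} (z : Fin n → Fin r) (k : Fin r) : ℕ := (cluster z k).card

/-- `d_u(S_k) = Σ_{j ∈ S_k} A_{uj}`, the number of edges from node `u` to cluster `k`. -/
def deg {n r : ℕ} (A : Matrix (Fin n) (Fin n) ℝ) (z : Fin n → Fin r)
    (u : Fin n) (k : Fin r) : ℝ :=
  ∑ j ∈ cluster z k, A u j

/-- `𝟙ᵀ A_{S_k S_ℓ} 𝟙 = Σ_{i ∈ S_k} Σ_{j ∈ S_ℓ} A_{ij}`. -/
def blocksum {n r : ℕ} (A : Matrix (Fin n) (Fin n) ℝ) (z : Fin n → Fin r)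
    (k ℓ : Fin r) : ℝ :=
  ∑ i ∈ cluster z k, ∑ j ∈ cluster z ℓ, A i j

/-- `φ_k = −(1/2)·(β + 𝟙ᵀA_{S_k}𝟙/m_k)` of the dual construction. -/
def phi {n r : ℕ} (A : Matrix (Fin n) (Fin n) ℝ) (z : Fin n → Fin r) (β : ℝ)
    (k : Fin r) : ℝ :=
  -(1 / 2) * (β + blocksum A z k k / (csize z k : ℝ))

/-- The dual vector `α`, defined blockwise by `α_{S_k} = (A_{S_k}𝟙 + φ_k·𝟙)/m_k`;
its entry at a node `u ∈ S_k` is `(d_u(S_k) + φ_k)/m_k`. -/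
def alpha {n r : ℕ} (A : Matrix (Fin n) (Fin n) ℝ) (z : Fin n → Fin r) (β : ℝ)
    (u : Fin n) : ℝ :=
  (deg A z u (z u) + phi A z β (z u)) / (csize z (z u) : ℝ)

/-- The dual matrix `Λ`, defined blockwise by
`Λ_{S_k} = −A_{S_k} + 𝟙α_{S_k}ᵀ + α_{S_k}𝟙ᵀ + βI` and, for `k ≠ ℓ`,
`Λ_{S_kS_ℓ} = −(I − E_{m_k}/m_k)·A_{S_kS_ℓ}·(I − E_{m_ℓ}/m_ℓ)`. -/
def Lam {n r : ℕ} (A : Matrix (Fin n) (Fin n) ℝ) (z : Fin n → Fin r) (β : ℝ) :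
    Matrix (Fin n) (Fin n) ℝ :=
  Matrix.of fun u v =>
    if z u = z v then
      -A u v + alpha A z β u + alpha A z β v + (if u = v then β else 0)
    else
      -(A u v - (∑ i ∈ cluster z (z u), A i v) / (csize z (z u) : ℝ)
          - (∑ j ∈ cluster z (z v), A u j) / (csize z (z v) : ℝ)
          + blocksum A z (z u) (z v) / ((csize z (z u) : ℝ) * (csize z (z v) : ℝ)))

/-- The dual matrix `Γ`, defined blockwise by `Γ_{S_k} = 0` and, for `k ≠ ℓ`,
`Γ_{S_kS_ℓ} = −A_{S_kS_ℓ} − Λ_{S_kS_ℓ} + 𝟙α_{S_ℓ}ᵀ + α_{S_k}𝟙ᵀ`. -/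
def Gam {n r : ℕ} (A : Matrix (Fin n) (Fin n) ℝ) (z : Fin n → Fin r) (β : ℝ) :
    Matrix (Fin n) (Fin n) ℝ :=
  Matrix.of fun u v =>
    if z u = z v then 0
    else -A u v - Lam A z β u v + alpha A z β v + alpha A z β u

/-!
With `P` the orthogonal projection onto the vectors summing to zero on every cluster, one has
`Λ = P (βI − A) P`: off the diagonal blocks this is the definition of `Λ`, and on a diagonal
block the choice of `φ_k` is exactly what makes `−A_{S_k} + 𝟙α_{S_k}ᵀ + α_{S_k}𝟙ᵀ + βI`
equal to `−(PAP)_{S_k} + β(I − E_{m_k}/m_k)`. Hence `xᵀΛx = (Px)ᵀ(βI − A)(Px) ≥ 0`, by the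
hypothesis applied to `u = Px`.
-/

theorem Matrix.posSemidef_conjTranspose_mul_mul_of_nonneg {m k R : Type*} [Fintype m]
    [Fintype k] [CommRing R] [PartialOrder R] [StarRing R] {M : Matrix k k R}
    (hM : M.IsHermitian) (B : Matrix k m R) (h : ∀ x, 0 ≤ star (B *ᵥ x) ⬝ᵥ M *ᵥ (B *ᵥ x)) :
    (Bᴴ * M * B).PosSemidef := by
  refine posSemidef_iff_dotProduct_mulVec.2 ⟨isHermitian_conjTranspose_mul_mul B hM, fun x => ?_⟩
  rw [← mulVec_mulVec, ← mulVec_mulVec, dotProduct_mulVec, vecMul_conjTranspose, star_star]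
  exact h x

namespace Lam

variable {n r : ℕ}

lemma mem_cluster {z : Fin n → Fin r} {k : Fin r} {i : Fin n} :
    i ∈ cluster z k ↔ z i = k := by
  simp [cluster]

lemma csize_pos (z : Fin n → Fin r) (i : Fin n) : 0 < csize z (z i) :=
  Finset.card_pos.2 ⟨i, mem_cluster.2 rfl⟩

/-- `P = I − blockdiag(E_{m_k}/m_k)`, the orthogonal projection onto the vectors summing to zero
on every cluster. -/
def centering (z : Fin n → Fin r) : Matrix (Fin n) (Fin n) ℝ :=
  1 - of fun u v => if z u = z v then (csize z (z u) : ℝ)⁻¹ else 0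

lemma centering_apply (z : Fin n → Fin r) (u v : Fin n) :
    centering z u v = (if u = v then 1 else 0) - if z u = z v then (csize z (z u) : ℝ)⁻¹ else 0 :=
  rfl

lemma centering_isSymm (z : Fin n → Fin r) : (centering z).IsSymm := by
  ext u v
  by_cases h : z u = z v
  · simp [centering, one_apply, h, eq_comm]
  · simp [centering, one_apply, h, Ne.symm h, eq_comm]

lemma centering_mulVec_apply (z : Fin n → Fin r) (x : Fin n → ℝ) (i : Fin n) :
    (centering z *ᵥ x) i = x i - (∑ j ∈ cluster z (z i), x j) / csize z (z i) := by
  rw [centering, sub_mulVec, one_mulVec, Pi.sub_apply]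
  congr 1
  simp [mulVec, dotProduct, cluster, Finset.sum_filter, Finset.mul_sum, eq_comm, div_eq_inv_mul]

lemma centering_mul_apply (z : Fin n → Fin r) (M : Matrix (Fin n) (Fin n) ℝ) (u v : Fin n) :
    (centering z * M) u v = M u v - (∑ a ∈ cluster z (z u), M a v) / csize z (z u) :=
  centering_mulVec_apply z (fun a => M a v) u

lemma mul_centering_apply (z : Fin n → Fin r) (M : Matrix (Fin n) (Fin n) ℝ) (u v : Fin n) :
    (M * centering z) u v = M u v - (∑ b ∈ cluster z (z v), M u b) / csize z (z v) := by
  rw [← transpose_apply (M * centering z), transpose_mul, (centering_isSymm z).eq,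
    centering_mul_apply]
  rfl

lemma sum_centering_mulVec (z : Fin n → Fin r) (x : Fin n → ℝ) (k : Fin r) :
    ∑ i ∈ cluster z k, (centering z *ᵥ x) i = 0 := by
  rcases (cluster z k).eq_empty_or_nonempty with hk | ⟨i, hi⟩
  · simp [hk]
  have hm : (csize z k : ℝ) ≠ 0 := by
    rw [← mem_cluster.1 hi]; exact_mod_cast (csize_pos z i).ne'
  have hmean : ∀ j ∈ cluster z k, (centering z *ᵥ x) j
      = x j - (∑ l ∈ cluster z k, x l) / csize z k := fun j hj => by
    rw [centering_mulVec_apply, mem_cluster.1 hj]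
  rw [Finset.sum_congr rfl hmean, Finset.sum_sub_distrib, Finset.sum_const, nsmul_eq_mul,
    ← csize, mul_div_cancel₀ _ hm, sub_self]

lemma centering_mul_self (z : Fin n → Fin r) : centering z * centering z = centering z := by
  ext u v
  rw [mul_centering_apply, sub_eq_self, div_eq_zero_iff]
  left
  simpa [← centering_mulVec_apply, (centering_isSymm z).apply u]
    using sum_centering_mulVec z (Pi.single u 1) (z v)

lemma centering_mul_mul_centering_apply (z : Fin n → Fin r) (M : Matrix (Fin n) (Fin n) ℝ)
    (u v : Fin n) :
    (centering z * M * centering z) u v =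
      M u v - (∑ a ∈ cluster z (z u), M a v) / csize z (z u)
        - (∑ b ∈ cluster z (z v), M u b) / csize z (z v)
        + (∑ a ∈ cluster z (z u), ∑ b ∈ cluster z (z v), M a b)
          / (csize z (z u) * csize z (z v)) := by
  simp only [mul_centering_apply, centering_mul_apply, Finset.sum_sub_distrib, ← Finset.sum_div]
  rw [Finset.sum_comm]
  field_simp
  ring

theorem Lam_eq_centering (z : Fin n → Fin r) {A : Matrix (Fin n) (Fin n) ℝ} (hA : A.IsSymm)
    (β : ℝ) : Lam A z β = centering z * (β • 1 - A) * centering z := by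
  ext u v
  rw [mul_sub, sub_mul, mul_smul_comm, smul_mul_assoc, mul_one, centering_mul_self,
    Matrix.sub_apply, Matrix.smul_apply, centering_mul_mul_centering_apply]
  by_cases h : z u = z v
  · have hsum : ∀ w, ∑ a ∈ cluster z (z v), A a w = ∑ b ∈ cluster z (z v), A w b :=
      fun w => Finset.sum_congr rfl fun a _ => hA.apply w a
    simp [Lam, alpha, phi, deg, blocksum, centering_apply, h, hsum]
    split_ifs <;> ring
  · have huv : u ≠ v := fun e => h (congrArg z e)
    simp [Lam, blocksum, centering_apply, h, huv]

end Lam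

open Lam in
theorem Lam_posSemidef_general (n r : ℕ)
    (z : Fin n → Fin r)
    (A : Matrix (Fin n) (Fin n) ℝ) (hA : A.IsSymm) (β : ℝ)
    (hquad : ∀ u : Fin n → ℝ, (∀ k : Fin r, ∑ i ∈ cluster z k, u i = 0) →
      u ⬝ᵥ A.mulVec u ≤ β * ∑ i, u i ^ 2) :
    (Lam A z β).PosSemidef := by
  have hM : (β • 1 - A).IsHermitian := by
    rw [IsHermitian, conjTranspose_eq_transpose_of_trivial, transpose_sub, transpose_smul,
      transpose_one, hA.eq]
  have hP : (centering z)ᴴ = centering z := by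
    rw [conjTranspose_eq_transpose_of_trivial, (centering_isSymm z).eq]
  have hPSD := posSemidef_conjTranspose_mul_mul_of_nonneg hM (centering z) fun x => by
    set u := centering z *ᵥ x
    have hu := hquad u (sum_centering_mulVec z x)
    have hnorm : u ⬝ᵥ u = ∑ i, u i ^ 2 := by simp [dotProduct, sq]
    rw [star_trivial, sub_mulVec, smul_mulVec, one_mulVec, dotProduct_sub, dotProduct_smul,
      smul_eq_mul, hnorm]
    linarith
  rwa [hP, ← Lam_eq_centering z hA] at hPSD

/-- If `uᵀAu ≤ β‖u‖²` for every vector `u` summing to zero on each cluster, then the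
dual matrix `Λ` is positive semidefinite. -/
theorem Lam_posSemidef (n r : ℕ) (hn : 1 ≤ n) (hr : 1 ≤ r)
    (z : Fin n → Fin r) (hz : Function.Surjective z)
    (A : Matrix (Fin n) (Fin n) ℝ) (hA : A.IsSymm) (β : ℝ)
    (hquad : ∀ u : Fin n → ℝ, (∀ k : Fin r, ∑ i ∈ cluster z k, u i = 0) →
      u ⬝ᵥ A.mulVec u ≤ β * ∑ i, u i ^ 2) :
    (Lam A z β).PosSemidef :=
  Lam_posSemidef_general n r z A hA β hquad
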